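/- arXiv:2209.08301 — 2 statements merged into one kernel-verified Lean document; each statement's English description precedes it below -/
import Mathlib

section
/- Let D be a symmetric positive-definite p×p matrix, B ∈ ℝ^{p×m}, Σ a symmetric positive-definite m×m matrix. Then the squared spectral (operator 2-) norm satisfies ‖D^{-1/2} (B Σ⁻¹ Bᵀ + D⁻¹)⁻¹ B Σ⁻¹‖₂² ≤ ‖Σ⁻¹‖₂ / 4. -/
/-!
Write `R = D^{1/2}` and `S⁻¹ = Tᵀ T` with `T = S^{-1/2}`. With `N = R B Tᵀ` one has
`B S⁻¹ Bᵀ + D⁻¹ = R⁻¹ (N Nᵀ + 1) R⁻¹`, so the matrix in question is `(N Nᵀ + 1)⁻¹ N T`.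
If `z = (N Nᵀ + 1)⁻¹ N x`, pairing `N Nᵀ z + z = N x` with `z` gives
`‖Nᵀ z‖² + ‖z‖² = ⟪x, Nᵀ z⟫ ≤ ‖x‖ ‖Nᵀ z‖ ≤ ‖Nᵀ z‖² + ‖x‖² / 4`, hence `‖(N Nᵀ + 1)⁻¹ N‖ ≤ 1/2`,
while `‖T‖² = ‖Tᵀ T‖ = ‖S⁻¹‖`.
-/

open Matrix

/-- The spectral norm (operator 2-norm) of a real matrix. -/
noncomputable def spec {n m : ℕ} (A : Matrix (Fin n) (Fin m) ℝ) : ℝ :=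
  ‖LinearMap.toContinuousLinearMap (Matrix.toEuclideanLin A)‖

open scoped Matrix.Norms.L2Operator MatrixOrder ComplexOrder

theorem LinearMap.norm_le_half_of_apply_adjoint_add_eq {E F : Type*}
    [NormedAddCommGroup E] [InnerProductSpace ℝ E] [FiniteDimensional ℝ E]
    [NormedAddCommGroup F] [InnerProductSpace ℝ F] [FiniteDimensional ℝ F]
    (A : E →ₗ[ℝ] F) {x : E} {z : F} (h : A (A.adjoint z) + z = A x) : ‖z‖ ≤ ‖x‖ / 2 := by
  set y := A.adjoint z
  have key : ‖y‖ ^ 2 + ‖z‖ ^ 2 ≤ ‖x‖ * ‖y‖ :=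
    calc ‖y‖ ^ 2 + ‖z‖ ^ 2 = inner ℝ (A y + z) z := by
          rw [inner_add_left, ← A.adjoint_inner_right, real_inner_self_eq_norm_sq,
            real_inner_self_eq_norm_sq]
      _ = inner ℝ x y := by rw [h, A.adjoint_inner_right]
      _ ≤ ‖x‖ * ‖y‖ := real_inner_le_norm x y
  have : ‖z‖ ^ 2 ≤ (‖x‖ / 2) ^ 2 := by nlinarith [sq_nonneg (‖y‖ - ‖x‖ / 2)]
  exact (pow_le_pow_iff_left₀ (norm_nonneg z) (by positivity) two_ne_zero).mp this

theorem Matrix.l2_opNorm_inv_mul_transpose_self_add_one_mul_le {m n : Type*} [Fintype m]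
    [DecidableEq m] [Fintype n] [DecidableEq n] (N : Matrix m n ℝ) :
    ‖(N * Nᵀ + 1)⁻¹ * N‖ ≤ 1 / 2 := by
  have hpos : (N * Nᵀ + 1).PosDef := by
    simpa using PosDef.posSemidef_add (posSemidef_self_mul_conjTranspose N) PosDef.one
  have hM : (N * Nᵀ + 1) * ((N * Nᵀ + 1)⁻¹ * N) = N := by
    rw [← Matrix.mul_assoc, mul_nonsing_inv _ ((isUnit_iff_isUnit_det _).mp hpos.isUnit),
      Matrix.one_mul]
  rw [l2_opNorm_def]
  refine ContinuousLinearMap.opNorm_le_bound _ (by norm_num) fun x => ?_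
  rw [one_div_mul_eq_div]
  apply (toEuclideanLin N).norm_le_half_of_apply_adjoint_add_eq
  rw [← toEuclideanLin_conjTranspose_eq_adjoint, conjTranspose_eq_transpose_of_trivial]
  simpa [add_mul] using congr(toEuclideanLin $hM x)

theorem Matrix.inv_mul_inv_add_inv_mul_eq_whiten {α : Type*} [CommRing α] {p m : Type*}
    [Fintype p] [DecidableEq p] [Fintype m] (R : Matrix p p α) (hR : IsUnit R.det)
    (hRt : Rᵀ = R) (B : Matrix p m α) (T : Matrix m m α) :
    R⁻¹ * (B * (Tᵀ * T) * Bᵀ + (R * R)⁻¹)⁻¹ * B * (Tᵀ * T) =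
      (R * B * Tᵀ * (R * B * Tᵀ)ᵀ + 1)⁻¹ * (R * B * Tᵀ) * T := by
  have hK : B * (Tᵀ * T) * Bᵀ + (R * R)⁻¹ =
      R⁻¹ * (R * B * Tᵀ * (R * B * Tᵀ)ᵀ + 1) * R⁻¹ := by
    simp only [transpose_mul, transpose_transpose, hRt, Matrix.mul_add, Matrix.add_mul,
      Matrix.mul_one, Matrix.mul_inv_rev, Matrix.mul_assoc, nonsing_inv_mul_cancel_left _ _ hR,
      mul_nonsing_inv _ hR]
  rw [hK, Matrix.mul_inv_rev, Matrix.mul_inv_rev, nonsing_inv_nonsing_inv _ hR]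
  simp only [Matrix.mul_assoc, nonsing_inv_mul_cancel_left _ _ hR]

theorem Matrix.PosSemidef.eigenvectorUnitary_mul_diagonal_sqrt_mul_star_eq_sqrt {n : Type*}
    [Fintype n] [DecidableEq n] {A : Matrix n n ℝ} (hA : A.PosSemidef) :
    (hA.isHermitian.eigenvectorUnitary : Matrix n n ℝ) *
      diagonal ((↑) ∘ Real.sqrt ∘ hA.isHermitian.eigenvalues) *
      (star hA.isHermitian.eigenvectorUnitary : Matrix n n ℝ) = CFC.sqrt A := by
  rw [CFC.sqrt_eq_real_sqrt A hA.nonneg, cfcₙ_eq_cfc, hA.isHermitian.cfc_eq]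
  rfl

theorem Matrix.transpose_sqrt {n : Type*} [Fintype n] [DecidableEq n]
    {A : Matrix n n ℝ} : (CFC.sqrt A)ᵀ = CFC.sqrt A := by
  simpa [IsHermitian] using (CFC.sqrt_nonneg A).posSemidef.isHermitian

theorem spec_eq_l2_opNorm {n m : ℕ} (A : Matrix (Fin n) (Fin m) ℝ) : spec A = ‖A‖ := rfl

theorem stmt_4 {p m : ℕ} (D : Matrix (Fin p) (Fin p) ℝ) (hD : D.PosDef)
    (B : Matrix (Fin p) (Fin m) ℝ) (S : Matrix (Fin m) (Fin m) ℝ) (hS : S.PosDef) :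
    spec (((hD.isHermitian.eigenvectorUnitary : Matrix (Fin p) (Fin p) ℝ) * diagonal ((↑) ∘ Real.sqrt ∘ hD.isHermitian.eigenvalues) * (star hD.isHermitian.eigenvectorUnitary : Matrix (Fin p) (Fin p) ℝ))⁻¹ * (B * S⁻¹ * Bᵀ + D⁻¹)⁻¹ * B * S⁻¹) ^ 2
      ≤ spec S⁻¹ / 4 := by
  rw [hD.posSemidef.eigenvectorUnitary_mul_diagonal_sqrt_mul_star_eq_sqrt, spec_eq_l2_opNorm,
    spec_eq_l2_opNorm]
  have hRR : CFC.sqrt D * CFC.sqrt D = D := CFC.sqrt_mul_sqrt_self D hD.posSemidef.nonneg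
  have hRdet : IsUnit (CFC.sqrt D).det :=
    isUnit_of_mul_isUnit_left <| by
      rw [← det_mul, hRR]; exact (isUnit_iff_isUnit_det _).mp hD.isUnit
  have hST : S⁻¹ = (CFC.sqrt S⁻¹)ᵀ * CFC.sqrt S⁻¹ := by
    rw [transpose_sqrt, CFC.sqrt_mul_sqrt_self _ hS.inv.posSemidef.nonneg]
  have hRt : (CFC.sqrt D)ᵀ = CFC.sqrt D := transpose_sqrt
  generalize CFC.sqrt D = R at hRR hRdet hRt ⊢
  generalize CFC.sqrt S⁻¹ = T at hST
  subst hRR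
  rw [hST, inv_mul_inv_add_inv_mul_eq_whiten R hRdet hRt B T]
  calc _ ≤ (‖(R * B * Tᵀ * (R * B * Tᵀ)ᵀ + 1)⁻¹ * (R * B * Tᵀ)‖ * ‖T‖) ^ 2 := by
        gcongr; exact l2_opNorm_mul _ _
    _ ≤ (1 / 2 * ‖T‖) ^ 2 := by
        gcongr; exact l2_opNorm_inv_mul_transpose_self_add_one_mul_le _
    _ = ‖Tᵀ * T‖ / 4 := by
        rw [← conjTranspose_eq_transpose_of_trivial, l2_opNorm_conjTranspose_mul_self]; ring
end

section
/- Let A ∈ ℝ^{N×d} and C be a symmetric positive-definite d×d matrix, and let c₀ ∈ ℝ^d. Then ‖C^{-1/2} (AᵀA + C⁻¹)⁻¹ C⁻¹ c₀‖₂² ≤ c₀ᵀ C⁻¹ c₀. -/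
/-!
With `S = C^{1/2}` (symmetric, `S * S = C`), conjugation by `S` gives
`S⁻¹ (AᵀA + C⁻¹)⁻¹ C⁻¹ = (G + 1)⁻¹ S⁻¹` for the Gram matrix `G = (A S)ᵀ (A S) ⪰ 0`, and
`c₀ᵀ C⁻¹ c₀ = ‖S⁻¹ c₀‖²`. So the claim is that `(G + 1)⁻¹` is a contraction, which holds because
`‖(G + 1) v‖² = ‖v‖² + 2 vᵀ G v + ‖G v‖² ≥ ‖v‖²`.
-/

open Matrix

/-- The Euclidean norm of a vector in `ℝ^d`. -/
noncomputable def vnorm {d : ℕ} (x : Fin d → ℝ) : ℝ :=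
  Real.sqrt (∑ i, x i ^ 2)

/-- `Matrix.PosSemidef.sqrt` as defined in the older Mathlib (removed since). -/
noncomputable def posSemidefSqrt {n : Type*} [Fintype n] [DecidableEq n] {A : Matrix n n ℝ}
    (hA : A.PosSemidef) : Matrix n n ℝ :=
  hA.1.eigenvectorUnitary.1 * diagonal ((↑) ∘ (√·) ∘ hA.1.eigenvalues) *
    (star hA.1.eigenvectorUnitary : Matrix n n ℝ)

lemma vnorm_sq {d : ℕ} (x : Fin d → ℝ) : vnorm x ^ 2 = x ⬝ᵥ x := by
  rw [vnorm, Real.sq_sqrt (Finset.sum_nonneg fun i _ => sq_nonneg _)]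
  simp only [dotProduct, sq]

section
variable {n : Type*} [Fintype n] [DecidableEq n]

lemma posSemidefSqrt_mul_self {A : Matrix n n ℝ} (hA : A.PosSemidef) :
    posSemidefSqrt hA * posSemidefSqrt hA = A := by
  set U : Matrix n n ℝ := (hA.1.eigenvectorUnitary : Matrix n n ℝ)
  have hU : star U * U = 1 := Unitary.coe_star_mul_self _
  have hspec := hA.1.spectral_theorem
  rw [Unitary.conjStarAlgAut_apply] at hspec
  conv_rhs => rw [hspec]
  calc posSemidefSqrt hA * posSemidefSqrt hA
      = U * (diagonal ((↑) ∘ (√·) ∘ hA.1.eigenvalues) * (star U * U) *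
          diagonal ((↑) ∘ (√·) ∘ hA.1.eigenvalues)) * star U := by
        simp only [posSemidefSqrt, U, Matrix.mul_assoc]
    _ = _ := by
        rw [hU, Matrix.mul_one, diagonal_mul_diagonal]
        congr 3
        funext i
        simp [Real.mul_self_sqrt (hA.eigenvalues_nonneg i)]

lemma posSemidefSqrt_transpose {A : Matrix n n ℝ} (hA : A.PosSemidef) :
    (posSemidefSqrt hA)ᵀ = posSemidefSqrt hA := by
  simp [posSemidefSqrt, star_eq_conjTranspose, conjTranspose_eq_transpose_of_trivial,
    transpose_mul, Matrix.mul_assoc]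

lemma dotProduct_self_le_of_posSemidef {G : Matrix n n ℝ} (hG : G.PosSemidef) (v : n → ℝ) :
    v ⬝ᵥ v ≤ ((G + 1) *ᵥ v) ⬝ᵥ ((G + 1) *ᵥ v) := by
  have hvGv : 0 ≤ v ⬝ᵥ (G *ᵥ v) := by simpa using hG.dotProduct_mulVec_nonneg v
  have hGv : 0 ≤ (G *ᵥ v) ⬝ᵥ (G *ᵥ v) := Finset.sum_nonneg fun i _ => mul_self_nonneg _
  rw [add_mulVec, one_mulVec, add_dotProduct, dotProduct_add, dotProduct_add,
    dotProduct_comm (G *ᵥ v) v]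
  linarith

lemma inv_mulVec_dotProduct_self_le {G : Matrix n n ℝ} (hG : G.PosSemidef) (w : n → ℝ) :
    ((G + 1)⁻¹ *ᵥ w) ⬝ᵥ ((G + 1)⁻¹ *ᵥ w) ≤ w ⬝ᵥ w := by
  have hunit : IsUnit (G + 1).det := (PosDef.posSemidef_add hG PosDef.one).det_pos.ne'.isUnit
  have h := dotProduct_self_le_of_posSemidef hG ((G + 1)⁻¹ *ᵥ w)
  rwa [mulVec_mulVec, mul_nonsing_inv _ hunit, one_mulVec] at h

variable {R : Type*} [CommRing R]

lemma inv_mul_inv_add_mul_inv_eq {m : Type*} [Fintype m] (A : Matrix m n R) {S : Matrix n n R}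
    (hS : IsUnit S.det) (hSt : Sᵀ = S) :
    S⁻¹ * (Aᵀ * A + (S * S)⁻¹)⁻¹ * (S * S)⁻¹ = ((A * S)ᵀ * (A * S) + 1)⁻¹ * S⁻¹ := by
  have hconj : S * (Aᵀ * A + (S * S)⁻¹) * S = (A * S)ᵀ * (A * S) + 1 := by
    rw [transpose_mul, hSt, Matrix.mul_inv_rev, Matrix.mul_add, Matrix.add_mul]
    simp only [Matrix.mul_assoc, nonsing_inv_mul _ hS, mul_nonsing_inv _ hS, Matrix.mul_one]
  rw [← hconj, Matrix.mul_inv_rev, Matrix.mul_inv_rev, Matrix.mul_inv_rev]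
  simp only [Matrix.mul_assoc]

lemma dotProduct_inv_mul_self_mulVec {S : Matrix n n R} (hSt : Sᵀ = S) (c : n → R) :
    c ⬝ᵥ ((S * S)⁻¹ *ᵥ c) = (S⁻¹ *ᵥ c) ⬝ᵥ (S⁻¹ *ᵥ c) := by
  rw [Matrix.mul_inv_rev, ← mulVec_mulVec, dotProduct_mulVec, ← mulVec_transpose,
    transpose_nonsing_inv, hSt]

end

theorem stmt_6 {N d : ℕ} (A : Matrix (Fin N) (Fin d) ℝ)
    (C : Matrix (Fin d) (Fin d) ℝ) (hC : C.PosDef) (c₀ : Fin d → ℝ) :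
    vnorm (((posSemidefSqrt hC.posSemidef)⁻¹ * (Aᵀ * A + C⁻¹)⁻¹ * C⁻¹) *ᵥ c₀) ^ 2
      ≤ c₀ ⬝ᵥ (C⁻¹ *ᵥ c₀) := by
  set S := posSemidefSqrt hC.posSemidef
  have hSt : Sᵀ = S := posSemidefSqrt_transpose _
  have hSS : S * S = C := posSemidefSqrt_mul_self _
  have hS : IsUnit S.det := by
    refine isUnit_of_mul_isUnit_left (y := S.det) ?_
    rw [← det_mul, hSS]
    exact hC.det_pos.ne'.isUnit
  rw [← hSS, inv_mul_inv_add_mul_inv_eq A hS hSt, ← mulVec_mulVec, vnorm_sq,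
    dotProduct_inv_mul_self_mulVec hSt]
  exact inv_mulVec_dotProduct_self_le (by simpa using posSemidef_conjTranspose_mul_self (A * S)) _
end
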